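/- arXiv:1509.05127 — 3 statements merged into one kernel-verified Lean document; each statement's English description precedes it below -/
import Mathlib

section
/- Let n ≥ 2 and let P be the n×n real matrix whose first column is (1 − n(n+1)/2, −1, 0, …, 0)ᵀ and whose (i,j) entry for j ≥ 2 equals 1/((i + j − 1)(i + j)). Then det P = 0 and the rank of P equals n − 1. -/
/-!
Write `(x)_n = x (x + 1) ⋯ (x + n - 1)` for the rising factorial. The vector
`b_k = (-1)^k C(n-1, k) (k + 2)_n` is a left null vector of `P`. Against a column `j ≥ 1`, the
entry `1/((k + j + 1)(k + j + 2))` cancels two factors of `(k + 2)_n`, leaving a polynomial of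
degree `n - 2` in `k`, which the `(n-1)`-st alternating binomial sum annihilates. Against the first
column the identity is `2 (3)_n = (n + 2) (2)_n`. Hence `det P = 0`.

Deleting the first row and column leaves the Gram matrix `∫₀¹ x^(i+1) x^(j+1) (1 - x) dx`: for
`v ≠ 0` its quadratic form is `∫₀¹ p(x)² (1 - x) dx > 0` with `p = ∑ vᵢ x^(i+1) ≠ 0`, so this minor
is nonsingular and `rank P ≥ n - 1`.
-/

open Polynomial Finset Matrix

theorem Polynomial.sum_range_alternating_choose_mul_eval_eq_zero {R : Type*} [CommRing R]
    {p : R[X]} {N : ℕ} (hp : p.natDegree < N) :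
    ∑ k ∈ range (N + 1), (-1 : R) ^ k * N.choose k * p.eval (k : R) = 0 := by
  have h := congr_fun (fwdDiff_iter_eq_zero_of_degree_lt hp) 0
  rw [fwdDiff_iter_eq_sum_shift, Pi.zero_apply] at h
  rw [← mul_zero ((-1 : R) ^ N), ← h, mul_sum]
  refine sum_congr rfl fun k hk => ?_
  have hsq : ((-1 : R) ^ (N - k)) ^ 2 = 1 := by rw [← pow_mul, pow_mul', neg_one_sq, one_pow]
  rw [← pow_mul_pow_sub (-1 : R) (mem_range_succ_iff.mp hk), zsmul_eq_mul, zero_add, nsmul_one]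
  push_cast
  linear_combination (-(-1 : R) ^ k * N.choose k * p.eval (k : R)) * hsq

theorem ascPochhammer_eval_add_two_add {R : Type*} [CommSemiring R] (i r : ℕ) (x : R) :
    (ascPochhammer R (i + 2 + r)).eval x =
      (ascPochhammer R i).eval x * ((x + i) * (x + i + 1)) *
        (ascPochhammer R r).eval (x + (i + 2)) := by
  rw [← ascPochhammer_mul, eval_mul, eval_comp, ascPochhammer_succ_eval, ascPochhammer_succ_eval]
  simp only [eval_add, eval_X, eval_natCast]
  push_cast
  ring

theorem sum_alternating_choose_mul_ascPochhammer_div_eq_zero {K : Type*} [Field K] [CharZero K]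
    {i n : ℕ} (hi : i + 2 ≤ n) :
    ∑ k ∈ range n, (-1 : K) ^ k * (n - 1).choose k * (ascPochhammer K n).eval ((k : K) + 2) /
      (((k : K) + i + 2) * (k + i + 3)) = 0 := by
  obtain ⟨r, rfl⟩ := Nat.exists_eq_add_of_le hi
  set q : K[X] := (ascPochhammer K i).comp (X + C 2) * (ascPochhammer K r).comp (X + C (i + 4 : K))
  have hq : q.natDegree < i + 2 + r - 1 := by
    have h : q.natDegree ≤ _ + _ := natDegree_mul_le
    simp only [natDegree_comp, ascPochhammer_natDegree, natDegree_X_add_C, mul_one] at h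
    omega
  rw [show i + 2 + r = i + 2 + r - 1 + 1 by omega,
    ← q.sum_range_alternating_choose_mul_eval_eq_zero hq]
  refine sum_congr rfl fun k _ => ?_
  rw [show i + 2 + r - 1 + 1 = i + 2 + r by omega, ascPochhammer_eval_add_two_add]
  have h2 : (k : K) + i + 2 ≠ 0 := by norm_cast
  have h3 : (k : K) + i + 3 ≠ 0 := by norm_cast
  simp only [q, eval_mul, eval_comp, eval_add, eval_X, eval_C]
  field_simp
  ring_nf

noncomputable def matrixP (n : ℕ) : Matrix (Fin n) (Fin n) ℝ :=
  Matrix.of fun i j : Fin n =>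
    if j.val = 0 then
      (if i.val = 0 then 1 - (n : ℝ) * (n + 1) / 2 else if i.val = 1 then -1 else 0)
    else
      (1 : ℝ) / (((i.val + j.val + 1 : ℕ) : ℝ) * ((i.val + j.val + 2 : ℕ) : ℝ))

noncomputable def leftNullVector (n : ℕ) (k : Fin n) : ℝ :=
  (-1) ^ (k : ℕ) * (n - 1).choose k * (ascPochhammer ℝ n).eval ((k : ℝ) + 2)

theorem leftNullVector_ne_zero {n : ℕ} (hn : 1 ≤ n) : leftNullVector n ≠ 0 := by
  obtain ⟨m, rfl⟩ := Nat.exists_eq_add_of_le' hn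
  refine Function.ne_iff.mpr ⟨0, ?_⟩
  have h0 : leftNullVector (m + 1) 0 = (ascPochhammer ℝ (m + 1)).eval 2 := by simp [leftNullVector]
  rw [h0]
  exact (ascPochhammer_pos (m + 1) 2 two_pos).ne'

theorem leftNullVector_dotProduct_col_zero {n : ℕ} (hn : 2 ≤ n) :
    leftNullVector n ⬝ᵥ (matrixP n).col ⟨0, by omega⟩ = 0 := by
  obtain ⟨m, rfl⟩ := Nat.exists_eq_add_of_le' hn
  have hrec := ascPochhammer_eval_succ (S := ℝ) (m + 2) 2
  rw [dotProduct, Fin.sum_univ_succ, Fin.sum_univ_succ, sum_eq_zero fun k _ => by simp [matrixP]]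
  simp only [leftNullVector, matrixP, col_apply, of_apply, Fin.val_zero, Fin.val_one,
    Fin.succ_zero_eq_one]
  norm_num at hrec ⊢
  linear_combination (m + 1 : ℝ) / 2 * hrec

theorem leftNullVector_dotProduct_col_succ {n i : ℕ} (hi : i + 1 < n) :
    leftNullVector n ⬝ᵥ (matrixP n).col ⟨i + 1, hi⟩ = 0 := by
  rw [← sum_alternating_choose_mul_ascPochhammer_div_eq_zero (K := ℝ) hi, dotProduct,
    ← Fin.sum_univ_eq_sum_range]
  refine sum_congr rfl fun k _ => ?_
  simp only [leftNullVector, col_apply, matrixP, of_apply, Nat.add_one_ne_zero, if_false,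
    mul_one_div]
  push_cast
  ring

theorem leftNullVector_vecMul_matrixP {n : ℕ} (hn : 2 ≤ n) : leftNullVector n ᵥ* matrixP n = 0 := by
  funext j
  rcases j with ⟨_ | i, hj⟩
  · exact leftNullVector_dotProduct_col_zero hn
  · exact leftNullVector_dotProduct_col_succ hj

theorem det_matrixP {n : ℕ} (hn : 2 ≤ n) : (matrixP n).det = 0 :=
  exists_vecMul_eq_zero_iff.mp
    ⟨leftNullVector n, leftNullVector_ne_zero (by omega), leftNullVector_vecMul_matrixP hn⟩

theorem Matrix.rank_lt_card_of_det_eq_zero {K n : Type*} [Field K] [Fintype n] [DecidableEq n]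
    {A : Matrix n n K} (h : A.det = 0) : A.rank < Fintype.card n := by
  obtain ⟨v, hv0, hv⟩ := exists_mulVec_eq_zero_iff.mpr h
  have hker : 0 < Module.finrank K (LinearMap.ker A.mulVecLin) :=
    Module.finrank_pos_iff_exists_ne_zero.mpr ⟨⟨v, hv⟩, fun h => hv0 (congrArg Subtype.val h)⟩
  have := LinearMap.finrank_range_add_finrank_ker A.mulVecLin
  rw [Module.finrank_fintype_fun_eq_card] at this
  rw [rank]
  omega

theorem integral_pow_mul_one_sub (k : ℕ) :
    ∫ x in (0 : ℝ)..1, x ^ k * (1 - x) = 1 / ((k + 1) * (k + 2)) := by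
  simp only [mul_sub, mul_one, ← pow_succ]
  rw [intervalIntegral.integral_sub ((continuous_pow _).intervalIntegrable _ _)
    ((continuous_pow _).intervalIntegrable _ _), integral_pow, integral_pow]
  field_simp
  push_cast
  ring

theorem dotProduct_mulVec_integral_gram {ι : Type*} [Fintype ι] {f : ι → ℝ → ℝ} {w : ℝ → ℝ}
    {a b : ℝ} (hf : ∀ i, Continuous (f i)) (hw : Continuous w) (v : ι → ℝ) :
    v ⬝ᵥ (of (fun i j => ∫ x in a..b, f i x * f j x * w x) *ᵥ v) =
      ∫ x in a..b, (∑ i, v i * f i x) ^ 2 * w x := by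
  have hsq : ∀ x, (∑ i, v i * f i x) ^ 2 * w x = ∑ i, ∑ j, v i * (f i x * f j x * w x * v j) := by
    intro x
    rw [sq, sum_mul_sum, sum_mul]
    exact sum_congr rfl fun i _ => by rw [sum_mul]; exact sum_congr rfl fun j _ => by ring
  simp only [hsq, dotProduct, mulVec, of_apply, mul_sum]
  rw [intervalIntegral.integral_finsetSum fun i _ =>
    Continuous.intervalIntegrable (by fun_prop) _ _]
  refine sum_congr rfl fun i _ => ?_
  rw [intervalIntegral.integral_finsetSum fun j _ =>
    Continuous.intervalIntegrable (by fun_prop) _ _]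
  refine sum_congr rfl fun j _ => ?_
  rw [intervalIntegral.integral_const_mul, intervalIntegral.integral_mul_const]

theorem integral_eval_sq_mul_one_sub_pos {p : ℝ[X]} (hp : p ≠ 0) :
    0 < ∫ x in (0 : ℝ)..1, p.eval x ^ 2 * (1 - x) := by
  obtain ⟨c, hc, hpc⟩ := (Set.Ioo_infinite (zero_lt_one' ℝ)).exists_notMem_finset p.roots.toFinset
  refine intervalIntegral.integral_pos zero_lt_one (by fun_prop) (fun x hx => ?_)
    ⟨c, Set.Ioo_subset_Icc_self hc, ?_⟩
  · exact mul_nonneg (sq_nonneg _) (sub_nonneg.mpr hx.2)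
  · have : p.eval c ≠ 0 := fun h => hpc (by simp [hp, h])
    have : 0 < 1 - c := sub_pos.mpr hc.2
    positivity

theorem det_gram_pow_succ_ne_zero (m : ℕ) :
    (of fun i j : Fin m =>
      ∫ x in (0 : ℝ)..1, x ^ (i + 1 : ℕ) * x ^ (j + 1 : ℕ) * (1 - x)).det ≠ 0 := by
  intro h
  obtain ⟨v, hv0, hv⟩ := exists_mulVec_eq_zero_iff.mpr h
  set p : ℝ[X] := ∑ i, C (v i) * X ^ (i + 1 : ℕ)
  have hp : p ≠ 0 := by
    obtain ⟨i, hi⟩ := Function.ne_iff.mp hv0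
    refine ne_of_apply_ne (coeff · (i + 1)) ?_
    simpa [p, coeff_X_pow, Fin.val_inj] using hi
  have hquad := dotProduct_mulVec_integral_gram (f := fun (i : Fin m) (x : ℝ) => x ^ (i + 1 : ℕ))
    (w := fun x => 1 - x) (a := 0) (b := 1) (by fun_prop) (by fun_prop) v
  rw [hv, dotProduct_zero] at hquad
  have hpos := integral_eval_sq_mul_one_sub_pos hp
  simp only [eval_finsetSum, eval_mul, eval_C, eval_pow, eval_X, p] at hpos
  linarith

theorem submatrix_succ_matrixP (m : ℕ) :
    (matrixP (m + 1)).submatrix Fin.succ Fin.succ =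
      of fun i j : Fin m => ∫ x in (0 : ℝ)..1, x ^ (i + 1 : ℕ) * x ^ (j + 1 : ℕ) * (1 - x) := by
  ext i j
  simp only [submatrix_apply, matrixP, of_apply, Fin.val_succ, Nat.add_one_ne_zero, if_false,
    ← pow_add, integral_pow_mul_one_sub]
  push_cast
  ring

/-- The matrix `P` with first column `(1 − n(n+1)/2, −1, 0, …, 0)ᵀ` and entries
`1/((i+j−1)(i+j))` in the remaining columns has zero determinant and rank `n − 1`. -/
theorem stmt8 (n : ℕ) (hn : 2 ≤ n)
    (P : Matrix (Fin n) (Fin n) ℝ)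
    (hP : P = Matrix.of fun i j : Fin n =>
      if j.val = 0 then
        (if i.val = 0 then 1 - (n : ℝ) * (n + 1) / 2 else if i.val = 1 then -1 else 0)
      else
        (1 : ℝ) / (((i.val + j.val + 1 : ℕ) : ℝ) * ((i.val + j.val + 2 : ℕ) : ℝ))) :
    P.det = 0 ∧ P.rank = n - 1 := by
  subst hP
  change (matrixP n).det = 0 ∧ (matrixP n).rank = n - 1
  have hdet := det_matrixP hn
  refine ⟨hdet, le_antisymm ?_ ?_⟩
  · have := rank_lt_card_of_det_eq_zero hdet
    rw [Fintype.card_fin] at this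
    omega
  · obtain ⟨m, rfl⟩ : ∃ m, n = m + 1 := ⟨n - 1, by omega⟩
    calc m + 1 - 1 = ((matrixP (m + 1)).submatrix Fin.succ Fin.succ).rank := by
          rw [submatrix_succ_matrixP, rank_of_det_ne_zero (det_gram_pow_succ_ne_zero m),
            Fintype.card_fin, Nat.add_sub_cancel]
      _ ≤ (matrixP (m + 1)).rank := rank_submatrix_le _ _ _
end

section
/- Let n ≥ 2. For ξ ∈ ℝ, let M₁(ξ) be the n×n symmetric matrix with (1,1) entry ξ and all other entries (M₁)_{ij} = 1/((i + j − 1)(i + j)), and for z ∈ ℝ let M₂(z) be the n×n symmetric matrix with (1,1) entry z and all other entries (M₂)_{ij} = 1/(i + j − 1). Then for every ξ ∈ ℝ: det M₁(ξ) = 0 if and only if det M₂((1 + 1/n)ξ + 1/2 − 1/(2n)) = 0. -/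
/-!
Both matrices are perturbations `A + c • E₀₀` of moment matrices `A i j = ∫₀¹ t^(i+j) w(t) dt`
(for the weights `w = 1 - t` and `w = 1`), which are positive definite, and
`det (A + c • E₀₀) = det A * (1 + c * (A⁻¹)₀₀)`. Both moment matrices have entries
`1 / ∏_{k ∈ S j} (i + k + 1)` for pole sets `S j = {j, j + 1}` resp. `{j}`; clearing denominators,
a solution `y` of `A y = e₀` gives a polynomial of degree `< n` vanishing at `1, …, n - 1`, whose
values at `-1` and `0` therefore differ by the factor `n`. This yields `(A⁻¹)₀₀ = n (n + 1)` resp.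
`n²`, and with `z = (1 + 1/n) ξ + 1/2 - 1/(2n)` one has `(z - 1) n² = (ξ - 1/2) n (n + 1)`.
-/

open Matrix Polynomial Finset MeasureTheory
open scoped Nat

namespace Polynomial

variable {K : Type*} [Field K]

theorem eval_prod_Ico_X_sub_C_neg_one {n : ℕ} (hn : 1 ≤ n) :
    eval (-1 : K) (∏ k ∈ Ico 1 n, (X - C (k : K))) =
      n * eval 0 (∏ k ∈ Ico 1 n, (X - C (k : K))) := by
  induction n, hn using Nat.le_induction with
  | base => simp
  | succ m hm ih =>
    rw [prod_Ico_succ_top hm, eval_mul, eval_mul, ih]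
    simp only [eval_sub, eval_X, eval_C]
    push_cast
    ring

variable [CharZero K]

theorem eval_neg_one_eq_mul_eval_zero {n : ℕ} {p : K[X]} (hdeg : p.degree < n)
    (hroot : ∀ k ∈ Ico 1 n, p.eval (k : K) = 0) : p.eval (-1) = n * p.eval 0 := by
  rcases Nat.eq_zero_or_pos n with rfl | hn
  · simp [eq_zero_of_degree_lt_of_eval_finset_eq_zero ∅ (by simpa using hdeg) (by simp)]
  set q : K[X] := ∏ k ∈ Ico 1 n, (X - C (k : K))
  have hq0 : q.eval 0 ≠ 0 := by
    simp only [q, eval_prod, eval_sub, eval_X, eval_C, zero_sub]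
    exact prod_ne_zero_iff.mpr fun k hk => by simp; grind
  have hqdeg : q.degree < n := by
    rw [degree_prod]
    simp only [degree_X_sub_C, sum_const, Nat.card_Ico, nsmul_eq_mul, mul_one]
    exact_mod_cast Nat.sub_lt hn one_pos
  have hr : q.eval 0 • p - p.eval 0 • q = 0 := by
    refine eq_zero_of_degree_lt_of_eval_finset_eq_zero ((range n).map Nat.castEmbedding) ?_ ?_
    · rw [card_map, card_range]
      exact (degree_sub_le _ _).trans_lt (max_lt ((degree_smul_le _ _).trans_lt hdeg)
        ((degree_smul_le _ _).trans_lt hqdeg))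
    · simp only [mem_map, mem_range, Nat.castEmbedding_apply]
      rintro _ ⟨k, hk, rfl⟩
      rcases Nat.eq_zero_or_pos k with rfl | hk0
      · simp [mul_comm]
      · have hq : q.eval (k : K) = 0 := by
          simp only [q, eval_prod, eval_sub, eval_X, eval_C]
          exact prod_eq_zero (mem_Ico.mpr ⟨hk0, hk⟩) (sub_self _)
        simp [hroot k (mem_Ico.mpr ⟨hk0, hk⟩), hq]
  have h := congrArg (eval (-1)) hr
  simp only [eval_sub, eval_smul, smul_eq_mul, eval_zero] at h
  apply mul_left_cancel₀ hq0
  linear_combination h + eval 0 p * eval_prod_Ico_X_sub_C_neg_one (K := K) hn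

end Polynomial

namespace Matrix

theorem det_add_single_self {R ι : Type*} [CommRing R] [Fintype ι] [DecidableEq ι]
    {A : Matrix ι ι R} {y : ι → R} {i : ι} (hy : A *ᵥ y = Pi.single i 1) (c : R) :
    (A + single i i c).det = A.det * (1 + c * y i) := by
  have hrow : A + single i i c = A.updateRow i (A i + c • Pi.single i 1) := by
    ext k l
    by_cases hk : k = i
    · subst hk
      simp [Pi.single_apply, single_apply, eq_comm]
    · simp [hk, Ne.symm hk]
  have hadj : A.adjugate i i = A.det * y i := by
    have h := congrFun (congrArg (A.adjugate *ᵥ ·) hy) i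
    rwa [mulVec_mulVec, adjugate_mul, smul_mulVec, one_mulVec, mulVec_single_one, eq_comm] at h
  rw [hrow, det_updateRow_add, updateRow_eq_self, det_updateRow_smul, ← adjugate_apply, hadj]
  ring

theorem of_ite_eq_add_single {R : Type*} [AddCommGroup R] {n : ℕ} [NeZero n]
    (f : Fin n → Fin n → R) (a : R) :
    (of fun i j : Fin n => if i.val = 0 ∧ j.val = 0 then a else f i j) =
      of f + single 0 0 (a - f 0 0) := by
  ext i j
  by_cases h : i = 0 ∧ j = 0
  · obtain ⟨rfl, rfl⟩ := h
    simp
  · simp [Fin.val_eq_zero_iff, h, eq_comm (a := (0 : Fin n))]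

end Matrix

theorem apply_zero_mul_prod_of_mulVec_eq_single {K : Type*} [Field K] [CharZero K] {n N : ℕ}
    [NeZero n] (S : Fin n → Finset ℕ) (hS : ∀ j, S j ⊆ range N) (hcard : ∀ j, N < n + #(S j))
    (hS0 : ∀ j ≠ 0, 0 ∈ range N \ S j) {G : Matrix (Fin n) (Fin n) K}
    (hG : ∀ i j, G i j = (∏ k ∈ S j, ((i : ℕ) + k + 1 : K))⁻¹)
    {y : Fin n → K} (hy : G *ᵥ y = Pi.single 0 1) :
    y 0 * ∏ k ∈ range N \ S 0, (k : K) = n * N ! := by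
  set L : Fin n → K[X] := fun j => ∏ k ∈ range N \ S j, (X + C ((k : K) + 1))
  set P : K[X] := ∑ j, y j • L j
  have hP (i : Fin n) :
      P.eval (i : K) = (Pi.single 0 1 : Fin n → K) i * ∏ k ∈ range N, ((i : ℕ) + k + 1 : K) := by
    rw [← hy, mulVec, dotProduct, sum_mul, eval_finsetSum]
    refine sum_congr rfl fun j _ => ?_
    have hne : ∏ k ∈ S j, ((i : ℕ) + k + 1 : K) ≠ 0 :=
      prod_ne_zero_iff.mpr fun k _ => by exact_mod_cast Nat.cast_add_one_ne_zero (R := K) (i + k)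
    rw [← prod_sdiff (hS j), hG, eval_smul, smul_eq_mul]
    simp only [L, eval_prod, eval_add, eval_X, eval_C]
    field_simp
    simp only [add_assoc]
  have hPdeg : P.degree < n := by
    refine (degree_sum_le _ _).trans_lt
      ((Finset.sup_lt_iff (WithBot.bot_lt_coe n)).mpr fun j _ => (degree_smul_le _ _).trans_lt ?_)
    simp only [L, degree_prod, degree_X_add_C, sum_const, card_sdiff_of_subset (hS j), card_range,
      nsmul_eq_mul, mul_one]
    exact Nat.cast_lt.mpr (by have := hcard j; have := NeZero.pos n; omega)
  have h := eval_neg_one_eq_mul_eval_zero hPdeg fun k hk => by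
    obtain ⟨hk1, hkn⟩ := mem_Ico.mp hk
    rw [hP ⟨k, hkn⟩, Pi.single_eq_of_ne (by simp [Fin.ext_iff]; omega), zero_mul]
  have h0 := hP 0
  simp only [Fin.val_zero, Nat.cast_zero, Pi.single_eq_same, one_mul, zero_add] at h0
  have hL (j : Fin n) : (L j).eval (-1) = ∏ k ∈ range N \ S j, (k : K) := by
    simp only [L, eval_prod, eval_add, eval_X, eval_C]
    exact prod_congr rfl fun k _ => by ring
  have hfact : (N ! : K) = ∏ k ∈ range N, ((k : K) + 1) := by
    rw [← prod_range_add_one_eq_factorial]; push_cast; rfl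
  rw [hfact, ← h0, ← h, ← hL, eval_finsetSum, sum_eq_single 0 (fun j _ hj => ?_) (by simp)]
  · rw [eval_smul, smul_eq_mul]
  · rw [eval_smul, hL, prod_eq_zero (hS0 j hj) Nat.cast_zero, smul_zero]

section MomentMatrix

variable {w : ℝ → ℝ} {n : ℕ}

noncomputable def momentMatrix (w : ℝ → ℝ) (n : ℕ) : Matrix (Fin n) (Fin n) ℝ :=
  of fun i j => ∫ t in (0 : ℝ)..1, t ^ (i.val + j.val) * w t

theorem dotProduct_momentMatrix_mulVec (hw : ContinuousOn w (Set.Icc 0 1)) (x : Fin n → ℝ) :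
    x ⬝ᵥ momentMatrix w n *ᵥ x = ∫ t in (0 : ℝ)..1, (∑ i, x i * t ^ i.val) ^ 2 * w t := by
  have hint {f : ℝ → ℝ} (hf : ContinuousOn f (Set.Icc 0 1)) : IntervalIntegrable f volume 0 1 :=
    hf.intervalIntegrable_of_Icc zero_le_one
  calc x ⬝ᵥ momentMatrix w n *ᵥ x
      = ∑ i, ∑ j, ∫ t in (0 : ℝ)..1, x i * x j * (t ^ (i.val + j.val) * w t) := by
        simp only [dotProduct, mulVec, momentMatrix, of_apply, mul_sum,
          intervalIntegral.integral_const_mul]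
        exact sum_congr rfl fun i _ => sum_congr rfl fun j _ => by ring
    _ = ∫ t in (0 : ℝ)..1, ∑ i, ∑ j, x i * x j * (t ^ (i.val + j.val) * w t) := by
        rw [intervalIntegral.integral_finsetSum fun i _ => hint (by fun_prop)]
        exact sum_congr rfl fun i _ =>
          (intervalIntegral.integral_finsetSum fun j _ => hint (by fun_prop)).symm
    _ = ∫ t in (0 : ℝ)..1, (∑ i, x i * t ^ i.val) ^ 2 * w t := by
        congr 1 with t
        rw [sq, sum_mul_sum, sum_mul]
        exact sum_congr rfl fun i _ => by rw [sum_mul]; exact sum_congr rfl fun j _ => by ring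

theorem posDef_momentMatrix (hw : ContinuousOn w (Set.Icc 0 1))
    (hw_pos : ∀ t ∈ Set.Ioo (0 : ℝ) 1, 0 < w t) : (momentMatrix w n).PosDef := by
  refine posDef_iff_dotProduct_mulVec.mpr ⟨?_, fun x hx => ?_⟩
  · ext i j
    simp [momentMatrix, add_comm]
  have hw_nonneg : ∀ t ∈ Set.Icc (0 : ℝ) 1, 0 ≤ w t := fun t ht =>
    continuousWithinAt_const.closure_le ((closure_Ioo (zero_ne_one' ℝ)).symm ▸ ht)
      ((hw t ht).mono Set.Ioo_subset_Icc_self) fun s hs => (hw_pos s hs).le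
  obtain ⟨t₀, ht₀, hp⟩ : ∃ t₀ ∈ Set.Ioo (0 : ℝ) 1, ∑ i, x i * t₀ ^ i.val ≠ 0 := by
    by_contra! h
    have hp : ∑ i : Fin n, C (x i) * X ^ i.val = 0 :=
      eq_zero_of_infinite_isRoot _ ((Set.Ioo_infinite zero_lt_one).mono fun t ht => by
        simpa [eval_finsetSum] using h t ht)
    exact hx (funext fun i => by
      simpa [finsetSum_coeff, coeff_C_mul_X_pow, Fin.val_inj] using congrArg (coeff · i.val) hp)
  rw [star_trivial, dotProduct_momentMatrix_mulVec hw]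
  simpa using intervalIntegral.integral_lt_integral_of_continuousOn_of_le_of_exists_lt zero_lt_one
    continuousOn_const (by fun_prop)
    (fun t ht => mul_nonneg (sq_nonneg _) (hw_nonneg t (Set.Ioc_subset_Icc_self ht)))
    ⟨t₀, Set.Ioo_subset_Icc_self ht₀, mul_pos (by positivity) (hw_pos t₀ ht₀)⟩

theorem momentMatrix_one (n : ℕ) :
    momentMatrix (fun _ => 1) n = of fun i j => 1 / ((i.val + j.val + 1 : ℕ) : ℝ) := by
  ext i j
  simp [momentMatrix, integral_pow]

theorem momentMatrix_one_sub (n : ℕ) :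
    momentMatrix (fun t => 1 - t) n = of fun i j =>
      1 / (((i.val + j.val + 1 : ℕ) : ℝ) * ((i.val + j.val + 2 : ℕ) : ℝ)) := by
  ext i j
  have hsplit (t : ℝ) :
      t ^ (i.val + j.val) * (1 - t) = t ^ (i.val + j.val) - t ^ (i.val + j.val + 1) := by ring
  simp only [momentMatrix, of_apply, hsplit]
  rw [intervalIntegral.integral_sub (intervalIntegral.intervalIntegrable_pow _)
    (intervalIntegral.intervalIntegrable_pow _), integral_pow, integral_pow]
  push_cast
  field_simp
  ring

theorem momentMatrix_one_mulVec_eq_single [NeZero n] {x : Fin n → ℝ}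
    (hx : momentMatrix (fun _ => 1) n *ᵥ x = Pi.single 0 1) : x 0 = n ^ 2 := by
  have h := apply_zero_mul_prod_of_mulVec_eq_single (N := n) (fun j => {j.val}) (by simp)
    (by simp) (fun j hj => by simpa [NeZero.pos n] using fun h => hj (Fin.val_eq_zero_iff.mp h.symm))
    (fun i j => by simp [momentMatrix_one]) hx
  obtain ⟨m, rfl⟩ := Nat.exists_eq_add_one_of_ne_zero (NeZero.ne n)
  have hset : range (m + 1) \ {0} = Ico 1 (m + 1) := by ext; simp; omega
  rw [Fin.val_zero, hset, ← Nat.cast_prod, prod_Ico_id_eq_factorial, Nat.factorial_succ] at h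
  apply mul_right_cancel₀ (by positivity : (m ! : ℝ) ≠ 0)
  push_cast at h ⊢
  linear_combination h

theorem momentMatrix_one_sub_mulVec_eq_single [NeZero n] {y : Fin n → ℝ}
    (hy : momentMatrix (fun t => 1 - t) n *ᵥ y = Pi.single 0 1) : y 0 = n * (n + 1) := by
  have h := apply_zero_mul_prod_of_mulVec_eq_single (N := n + 1) (fun j => {j.val, j.val + 1})
    (fun j => by simp [insert_subset_iff]) (fun j => by simp)
    (fun j hj => by simpa using fun h => hj (Fin.val_eq_zero_iff.mp h.symm))
    (fun i j => by rw [momentMatrix_one_sub, of_apply, prod_pair (by omega)]; push_cast; ring) hy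
  obtain ⟨m, rfl⟩ := Nat.exists_eq_add_one_of_ne_zero (NeZero.ne n)
  have hset : range (m + 1 + 1) \ {0, 1} = Ico 2 (m + 2) := by ext; simp; omega
  have hprod : ∏ k ∈ Ico 2 (m + 2), k = (m + 1)! := by
    rw [← prod_Ico_id_eq_factorial, prod_eq_prod_Ico_succ_bot (by omega : 1 < m + 1 + 1), one_mul]
  rw [Fin.val_zero, zero_add, hset, ← Nat.cast_prod, hprod, Nat.factorial_succ (m + 1)] at h
  apply mul_right_cancel₀ (by positivity : ((m + 1)! : ℝ) ≠ 0)
  push_cast at h ⊢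
  linear_combination h

end MomentMatrix

/-- For all `ξ`, `det M₁(ξ) = 0` iff `det M₂((1 + 1/n)ξ + 1/2 − 1/(2n)) = 0`, where
`M₁(ξ)` has `(1,1)` entry `ξ` and other entries `1/((i+j−1)(i+j))`, and `M₂(z)` has
`(1,1)` entry `z` and other entries `1/(i+j−1)`. -/
theorem stmt10 (n : ℕ) (hn : 2 ≤ n)
    (M₁ M₂ : ℝ → Matrix (Fin n) (Fin n) ℝ)
    (hM₁ : ∀ ξ, M₁ ξ = Matrix.of fun i j : Fin n =>
      if i.val = 0 ∧ j.val = 0 then ξ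
      else (1 : ℝ) / (((i.val + j.val + 1 : ℕ) : ℝ) * ((i.val + j.val + 2 : ℕ) : ℝ)))
    (hM₂ : ∀ z, M₂ z = Matrix.of fun i j : Fin n =>
      if i.val = 0 ∧ j.val = 0 then z
      else (1 : ℝ) / ((i.val + j.val + 1 : ℕ) : ℝ)) :
    ∀ ξ : ℝ, (M₁ ξ).det = 0 ↔
      (M₂ ((1 + 1 / (n : ℝ)) * ξ + 1 / 2 - 1 / (2 * (n : ℝ)))).det = 0 := by
  intro ξ
  have : NeZero n := ⟨by omega⟩
  have hH := posDef_momentMatrix (n := n) continuousOn_const fun _ _ => one_pos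
  have hB := posDef_momentMatrix (w := fun t => 1 - t) (n := n) (by fun_prop)
    fun t ht => sub_pos.mpr ht.2
  obtain ⟨x, hx⟩ := mulVec_surjective_iff_isUnit.mpr hH.isUnit (Pi.single 0 1)
  obtain ⟨y, hy⟩ := mulVec_surjective_iff_isUnit.mpr hB.isUnit (Pi.single 0 1)
  rw [hM₁, hM₂, of_ite_eq_add_single, of_ite_eq_add_single, ← momentMatrix_one,
    ← momentMatrix_one_sub, det_add_single_self hx, det_add_single_self hy,
    momentMatrix_one_mulVec_eq_single hx, momentMatrix_one_sub_mulVec_eq_single hy]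
  norm_num [hH.det_pos.ne', hB.det_pos.ne']
  congr! 1
  field_simp
  ring
end

section
/- Let n ≥ 2 and let ξ₀ be the unique real number with det M₁(ξ₀) = 0, where M₁(ξ) is the n×n symmetric matrix with (1,1) entry ξ and all other entries 1/((i + j − 1)(i + j)). Let M₂(z) be the n×n symmetric matrix with (1,1) entry z and all other entries 1/(i + j − 1). Then for every z > (1 + 1/n)ξ₀ + 1/2 − 1/(2n), the matrix M₂(z) is positive definite. -/
/-!
Both matrices are corner perturbations of Hankel matrices: `M₂(z) = H + (z - 1) e₀e₀ᵀ` with `H` the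
Hilbert matrix, and `M₁(ξ) = D + (ξ - 1/2) e₀e₀ᵀ` with `D` the Hankel matrix of
`1/((s+1)(s+2)) = 1/(s+1) - 1/(s+2)`.

For a vector `v`, `(H v)_r` is the value at `x = r + 1` of the rational function `∑ⱼ vⱼ/(x + j)`, so
vectors `v` with `H v` (or `D v`) supported on the first row are read off from the partial fraction
expansions of `∏_{t=2}^n (t - x) / ∏ₜ (x + t)`. This produces the first column `k` of `H⁻¹`, with
`k₀ = n²`, and a null vector of `M₁(ξ)` for `ξ = 1/2 - 1/(n(n+1))`, which is therefore `ξ₀`; the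
threshold becomes `1 - 1/n²`.

`H` is positive definite, being the Gram matrix of the monomials in `L²[0,1]`, and Cauchy–Schwarz
for its form gives `x₀² = (xᵀ H k)² ≤ n² xᵀ H x`. Hence `xᵀ M₂(z) x = xᵀ H x + (z - 1) x₀² > 0`
as soon as `z - 1 > -1/n²`.
-/

open Matrix Finset Polynomial
open scoped Nat

/-- The coefficient of `1 / (x + i)` in the expansion of `P x / ∏_{j < m} (x + j)`. -/
noncomputable def partialFractionCoeff (m : ℕ) (P : ℝ[X]) (i : ℕ) : ℝ :=
  Lagrange.nodalWeight (range m) (fun j : ℕ => -(j : ℝ)) i * P.eval (-(i : ℝ))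

lemma sum_partialFractionCoeff_div {m : ℕ} {P : ℝ[X]} (hP : P.degree < m) {x : ℝ}
    (hx : 0 < x) :
    ∑ i ∈ range m, partialFractionCoeff m P i / (x + i) = P.eval x / ∏ i ∈ range m, (x + i) := by
  have hnode : ∀ i ∈ range m, x ≠ -(i : ℝ) := fun i _ => by
    linarith [(i.cast_nonneg : (0 : ℝ) ≤ i)]
  have hinj : Set.InjOn (fun j : ℕ => -(j : ℝ)) (range m) :=
    (neg_injective.comp Nat.cast_injective).injOn
  have h := congrArg (eval x) (Lagrange.eq_interpolate hinj (by simpa using hP))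
  rw [Lagrange.eval_interpolate_not_at_node _ hnode, Lagrange.eval_nodal] at h
  simp only [sub_neg_eq_add] at h
  rw [eq_div_iff (prod_ne_zero_iff.mpr fun i _ => by positivity), h, mul_comm]
  congr 1
  refine sum_congr rfl fun i _ => ?_
  rw [partialFractionCoeff]
  ring

lemma sum_partialFractionCoeff_eq_zero {m : ℕ} {P : ℝ[X]} (hP : P.degree < (m - 1 : ℕ)) :
    ∑ i ∈ range m, partialFractionCoeff m P i = 0 := by
  have hinj : Set.InjOn (fun j : ℕ => -(j : ℝ)) (range m) :=
    (neg_injective.comp Nat.cast_injective).injOn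
  have h := Lagrange.coeff_eq_sum hinj (hP.trans_le (by simp))
  rw [card_range, coeff_eq_zero_of_degree_lt hP] at h
  rw [h]
  refine sum_congr rfl fun i _ => ?_
  rw [partialFractionCoeff, Lagrange.nodalWeight, prod_inv_distrib]
  ring

lemma prod_range_erase_zero_natCast (n : ℕ) : ∏ j ∈ (range n).erase 0, (j : ℝ) = (n - 1)! := by
  cases n with
  | zero => simp
  | succ m =>
    rw [range_eq_Ico, ← Nat.Ico_succ_left_eq_erase_Ico, Nat.add_sub_cancel, Nat.succ_eq_add_one,
      zero_add, ← prod_Ico_id_eq_factorial m, Nat.cast_prod]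

lemma prod_range_one_add_natCast (m : ℕ) : ∏ i ∈ range m, (1 + (i : ℝ)) = m ! := by
  rw [← prod_range_add_one_eq_factorial m]
  push_cast
  exact prod_congr rfl fun i _ => add_comm _ _

lemma partialFractionCoeff_zero (m : ℕ) (P : ℝ[X]) :
    partialFractionCoeff m P 0 = P.eval 0 / (m - 1)! := by
  simp [partialFractionCoeff, Lagrange.nodalWeight, prod_inv_distrib,
    prod_range_erase_zero_natCast, div_eq_inv_mul]

/-- The numerator of both expansions used below: it vanishes at `x = r + 1` for each row `r ≠ 0`. -/
noncomputable def nodePoly (n : ℕ) : ℝ[X] := ∏ j ∈ (range n).erase 0, (C ((j : ℝ) + 1) - X)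

lemma eval_nodePoly (n : ℕ) (x : ℝ) :
    (nodePoly n).eval x = ∏ j ∈ (range n).erase 0, ((j : ℝ) + 1 - x) := by
  simp [nodePoly, eval_prod]

lemma degree_nodePoly_lt {n : ℕ} (hn : n ≠ 0) : (nodePoly n).degree < n := by
  have hlin (a : ℝ) : (C a - X).degree = 1 := by
    rw [← neg_sub, degree_neg, degree_X_sub_C]
  have hn0 : 0 < n := Nat.pos_of_ne_zero hn
  calc (nodePoly n).degree ≤ ∑ j ∈ (range n).erase 0, (C ((j : ℝ) + 1) - X).degree := by
        rw [nodePoly]; exact degree_prod_le _ _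
    _ = (n - 1 : ℕ) := by
        rw [sum_congr rfl fun j _ => hlin _, sum_const, card_erase_of_mem (mem_range.mpr hn0)]
        simp
    _ < n := by exact_mod_cast Nat.sub_lt hn0 one_pos

lemma eval_nodePoly_natCast_add_one {n r : ℕ} (hr0 : r ≠ 0) (hr : r < n) :
    (nodePoly n).eval ((r : ℝ) + 1) = 0 := by
  rw [eval_nodePoly]
  exact prod_eq_zero (mem_erase.mpr ⟨hr0, mem_range.mpr hr⟩) (sub_self _)

lemma eval_nodePoly_one (n : ℕ) : (nodePoly n).eval 1 = (n - 1)! := by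
  simp [eval_nodePoly, prod_range_erase_zero_natCast]

lemma eval_nodePoly_zero (n : ℕ) : (nodePoly n).eval 0 = n ! := by
  rw [eval_nodePoly, prod_erase _ (by simp), ← prod_range_add_one_eq_factorial n]
  push_cast
  simp

def hankel {R : Type*} (f : ℕ → R) (n : ℕ) : Matrix (Fin n) (Fin n) R :=
  of fun i j => f (i + j)

lemma hankel_transpose {R : Type*} (f : ℕ → R) (n : ℕ) : (hankel f n)ᵀ = hankel f n := by
  ext i j
  simp [hankel, add_comm]

lemma of_ite_eq_hankel_add_single {R : Type*} [AddCommGroup R] {n : ℕ} [NeZero n] (a : R)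
    (f : ℕ → R) :
    (of fun i j : Fin n => if i.val = 0 ∧ j.val = 0 then a else f (i.val + j.val)) =
      hankel f n + single 0 0 (a - f 0) := by
  ext i j
  simp only [hankel, of_apply, Matrix.add_apply, single_apply, Fin.ext_iff, Fin.val_zero,
    eq_comm (a := 0)]
  split_ifs with h
  · simp [h.1, h.2]
  · simp

noncomputable def hilbertMatrix (n : ℕ) : Matrix (Fin n) (Fin n) ℝ :=
  hankel (fun s => 1 / ((s + 1 : ℕ) : ℝ)) n

lemma hilbertMatrix_mulVec_apply {n : ℕ} (v : ℕ → ℝ) (r : Fin n) :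
    (hilbertMatrix n *ᵥ fun j : Fin n => v j) r = ∑ j ∈ range n, v j / ((r : ℕ) + 1 + j : ℝ) := by
  simp only [mulVec, dotProduct, hilbertMatrix, hankel, of_apply]
  rw [← Fin.sum_univ_eq_sum_range (fun j => v j / ((r : ℕ) + 1 + j : ℝ))]
  refine sum_congr rfl fun j _ => ?_
  push_cast
  ring

lemma dotProduct_hilbertMatrix_mulVec {n : ℕ} (x : Fin n → ℝ) :
    x ⬝ᵥ hilbertMatrix n *ᵥ x = ∫ t in (0 : ℝ)..1, (∑ i, x i * t ^ (i : ℕ)) ^ 2 := by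
  have hint (i j : Fin n) :
      ∫ t in (0 : ℝ)..1, x i * x j * t ^ ((i : ℕ) + j) = x i * (hilbertMatrix n i j * x j) := by
    simp only [hilbertMatrix, hankel, of_apply]
    rw [intervalIntegral.integral_const_mul, integral_pow]
    push_cast
    ring
  have hsq (t : ℝ) : (∑ i, x i * t ^ (i : ℕ)) ^ 2 = ∑ i, ∑ j, x i * x j * t ^ ((i : ℕ) + j) := by
    rw [sq, sum_mul_sum]
    exact sum_congr rfl fun i _ => sum_congr rfl fun j _ => by ring
  have hintegrable {f : ℝ → ℝ} (hf : Continuous f) :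
      IntervalIntegrable f MeasureTheory.volume 0 1 :=
    hf.intervalIntegrable _ _
  simp_rw [hsq]
  rw [intervalIntegral.integral_finsetSum fun i _ => hintegrable (by fun_prop)]
  refine sum_congr rfl fun i _ => ?_
  rw [intervalIntegral.integral_finsetSum fun j _ => hintegrable (by fun_prop), mulVec, dotProduct,
    mul_sum]
  exact sum_congr rfl fun j _ => (hint i j).symm

lemma integral_eval_sq_pos {p : ℝ[X]} (hp : p ≠ 0) : 0 < ∫ t in (0 : ℝ)..1, p.eval t ^ 2 := by
  obtain ⟨c, hcI, hc⟩ := ((Set.Icc_infinite (zero_lt_one' ℝ)).sdiff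
    (Polynomial.finite_setOfPred_isRoot hp)).nonempty
  have hc : p.eval c ≠ 0 := hc
  exact intervalIntegral.integral_pos zero_lt_one (by fun_prop) (fun t _ => sq_nonneg _)
    ⟨c, hcI, by positivity⟩

lemma posDef_hilbertMatrix (n : ℕ) : (hilbertMatrix n).PosDef := by
  refine posDef_iff_dotProduct_mulVec.mpr
    ⟨(conjTranspose_eq_transpose_of_trivial _).trans (hankel_transpose _ _), fun x hx => ?_⟩
  obtain ⟨i, hi⟩ := Function.ne_iff.mp hx
  set p : ℝ[X] := ∑ j : Fin n, C (x j) * X ^ (j : ℕ)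
  have hcoeff : p.coeff i = x i := by
    simp [p, Fin.val_inj]
  have hp : p ≠ 0 := fun h => hi (by simpa [h] using hcoeff.symm)
  simpa [p, eval_finsetSum, dotProduct_hilbertMatrix_mulVec] using integral_eval_sq_pos hp

lemma sq_dotProduct_mulVec_le {ι : Type*} [Fintype ι] {H : Matrix ι ι ℝ} (hH : H.PosSemidef)
    (x y : ι → ℝ) : (x ⬝ᵥ H *ᵥ y) ^ 2 ≤ (x ⬝ᵥ H *ᵥ x) * (y ⬝ᵥ H *ᵥ y) := by
  have hsymm : y ⬝ᵥ H *ᵥ x = x ⬝ᵥ H *ᵥ y := by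
    rw [dotProduct_mulVec, ← mulVec_transpose, ← conjTranspose_eq_transpose_of_trivial, hH.1.eq,
      dotProduct_comm]
  have h := discrim_le_zero (a := y ⬝ᵥ H *ᵥ y) (b := 2 * (x ⬝ᵥ H *ᵥ y)) (c := x ⬝ᵥ H *ᵥ x)
    fun t => by
      have := hH.dotProduct_mulVec_nonneg (x + t • y)
      simp only [star_trivial, mulVec_add, mulVec_smul, dotProduct_add, add_dotProduct,
        dotProduct_smul, smul_dotProduct, hsymm, smul_eq_mul] at this
      linarith
  rw [discrim] at h
  linarith

noncomputable def hilbertInvFirstCol (n : ℕ) : Fin n → ℝ :=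
  fun j => n * partialFractionCoeff n (nodePoly n) j

lemma hilbertMatrix_mulVec_hilbertInvFirstCol (n : ℕ) [NeZero n] :
    hilbertMatrix n *ᵥ hilbertInvFirstCol n = Pi.single 0 1 := by
  funext r
  unfold hilbertInvFirstCol
  rw [hilbertMatrix_mulVec_apply fun j => n * partialFractionCoeff n (nodePoly n) j]
  simp_rw [mul_div_assoc, ← mul_sum]
  rw [sum_partialFractionCoeff_div (degree_nodePoly_lt (NeZero.ne n)) (by positivity)]
  by_cases hr : (r : ℕ) = 0
  · obtain rfl : r = 0 := Fin.ext hr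
    have hn := Nat.mul_factorial_pred (NeZero.ne n)
    rw [Pi.single_eq_same, Fin.val_zero, Nat.cast_zero, zero_add, eval_nodePoly_one,
      prod_range_one_add_natCast, ← hn]
    have : (n : ℝ) ≠ 0 := Nat.cast_ne_zero.mpr (NeZero.ne n)
    push_cast
    field_simp
  · rw [eval_nodePoly_natCast_add_one hr r.isLt, zero_div, mul_zero,
      Pi.single_eq_of_ne (fun h => hr (by simp [h]))]

lemma hilbertInvFirstCol_zero (n : ℕ) [NeZero n] : hilbertInvFirstCol n 0 = n ^ 2 := by
  have hn := Nat.mul_factorial_pred (NeZero.ne n)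
  rw [hilbertInvFirstCol, Fin.val_zero, partialFractionCoeff_zero, eval_nodePoly_zero, ← hn]
  push_cast
  field_simp

lemma sq_le_dotProduct_hilbertMatrix_mulVec (n : ℕ) [NeZero n] (x : Fin n → ℝ) :
    x 0 ^ 2 ≤ n ^ 2 * (x ⬝ᵥ hilbertMatrix n *ᵥ x) := by
  have h := sq_dotProduct_mulVec_le (posDef_hilbertMatrix n).posSemidef x (hilbertInvFirstCol n)
  rwa [hilbertMatrix_mulVec_hilbertInvFirstCol, dotProduct_single_one, dotProduct_single_one,
    hilbertInvFirstCol_zero, mul_comm] at h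

lemma posDef_hilbertMatrix_add_single (n : ℕ) [NeZero n] {c : ℝ} (hc : -1 / n ^ 2 < c) :
    (hilbertMatrix n + single 0 0 c).PosDef := by
  refine posDef_iff_dotProduct_mulVec.mpr ⟨?_, fun x hx => ?_⟩
  · simp [IsHermitian, hilbertMatrix, hankel_transpose]
  · have hQ := (posDef_hilbertMatrix n).dotProduct_mulVec_pos hx
    have hCS := sq_le_dotProduct_hilbertMatrix_mulVec n x
    rw [star_trivial] at hQ ⊢
    have hsingle : x ⬝ᵥ single 0 0 c *ᵥ x = c * x 0 ^ 2 := by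
      rw [single_mulVec, ← Pi.single, dotProduct_single]
      ring
    rw [add_mulVec, dotProduct_add, hsingle]
    have hn : (0 : ℝ) < n ^ 2 := by have := NeZero.pos n; positivity
    rw [div_lt_iff₀ hn] at hc
    rcases le_or_gt 0 c with hc0 | hc0
    · positivity
    · nlinarith

noncomputable def hilbertDiffMatrix (n : ℕ) : Matrix (Fin n) (Fin n) ℝ :=
  hankel (fun s => 1 / (((s + 1 : ℕ) : ℝ) * ((s + 2 : ℕ) : ℝ))) n

/-- Since `1/((s+1)(s+2)) = 1/(s+1) - 1/(s+2)`, Abel summation turns `hilbertDiffMatrix` acting on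
partial sums of `d` into the Cauchy kernel `1/(x + j)` acting on `d`. -/
lemma hilbertDiffMatrix_mulVec_partialSums {n : ℕ} (d : ℕ → ℝ)
    (hd : ∑ i ∈ range (n + 1), d i = 0) (r : Fin n) :
    (hilbertDiffMatrix n *ᵥ fun j : Fin n => ∑ i ∈ range (j + 1), d i) r =
      ∑ j ∈ range (n + 1), d j / ((r : ℕ) + 1 + j : ℝ) := by
  set f : ℕ → ℝ := fun j => 1 / ((r : ℕ) + 1 + j : ℝ) with hf
  have h := sum_range_by_parts f d (n + 1)
  simp only [smul_eq_mul, Nat.add_sub_cancel, hd, mul_zero, zero_sub] at h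
  simp only [mulVec, dotProduct, hilbertDiffMatrix, hankel, of_apply]
  rw [sum_congr rfl fun j _ => (one_div_mul_eq_div _ (d j)).symm, h, ← sum_neg_distrib,
    ← Fin.sum_univ_eq_sum_range (fun i => -((f (i + 1) - f i) * ∑ j ∈ range (i + 1), d j))]
  refine sum_congr rfl fun j _ => ?_
  have h1 : ((r : ℕ) + 1 + j : ℝ) ≠ 0 := by positivity
  have h2 : ((r : ℕ) + 1 + (j + 1 : ℕ) : ℝ) ≠ 0 := by positivity
  push_cast [hf] at h2 ⊢
  field_simp
  ring

noncomputable def hilbertDiffNullVec (n : ℕ) : Fin n → ℝ :=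
  fun j => ∑ i ∈ range (j + 1), partialFractionCoeff (n + 1) (nodePoly n) i

lemma hilbertDiffNullVec_zero (n : ℕ) [NeZero n] : hilbertDiffNullVec n 0 = 1 := by
  have : (n ! : ℝ) ≠ 0 := by positivity
  simp [hilbertDiffNullVec, partialFractionCoeff_zero, eval_nodePoly_zero, this]

lemma hilbertDiffMatrix_mulVec_hilbertDiffNullVec (n : ℕ) [NeZero n] :
    hilbertDiffMatrix n *ᵥ hilbertDiffNullVec n = Pi.single 0 (1 / ((n : ℝ) * (n + 1))) := by
  have hdeg : (nodePoly n).degree < n := degree_nodePoly_lt (NeZero.ne n)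
  funext r
  unfold hilbertDiffNullVec
  rw [hilbertDiffMatrix_mulVec_partialSums _
      (sum_partialFractionCoeff_eq_zero (by simpa using hdeg)),
    sum_partialFractionCoeff_div (hdeg.trans (by exact_mod_cast n.lt_succ_self)) (by positivity)]
  by_cases hr : (r : ℕ) = 0
  · obtain rfl : r = 0 := Fin.ext hr
    have hn := Nat.mul_factorial_pred (NeZero.ne n)
    rw [Pi.single_eq_same, Fin.val_zero, Nat.cast_zero, zero_add, eval_nodePoly_one,
      prod_range_one_add_natCast, Nat.factorial_succ, ← hn]
    have : (n : ℝ) ≠ 0 := Nat.cast_ne_zero.mpr (NeZero.ne n)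
    push_cast
    field_simp
  · rw [eval_nodePoly_natCast_add_one hr r.isLt, zero_div,
      Pi.single_eq_of_ne (fun h => hr (by simp [h]))]

lemma det_hilbertDiffMatrix_add_single_eq_zero (n : ℕ) [NeZero n] :
    (hilbertDiffMatrix n + single 0 0 (-(1 / ((n : ℝ) * (n + 1))))).det = 0 := by
  refine exists_mulVec_eq_zero_iff.mp ⟨hilbertDiffNullVec n, fun h => ?_, ?_⟩
  · simpa [h] using hilbertDiffNullVec_zero n
  · rw [add_mulVec, hilbertDiffMatrix_mulVec_hilbertDiffNullVec, single_mulVec,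
      hilbertDiffNullVec_zero, ← Pi.single, mul_one, ← Pi.single_add, add_neg_cancel,
      Pi.single_zero]

theorem stmt13_general (n : ℕ) (hn : 2 ≤ n)
    (M₁ M₂ : ℝ → Matrix (Fin n) (Fin n) ℝ)
    (hM₁ : ∀ ξ, M₁ ξ = Matrix.of fun i j : Fin n =>
      if i.val = 0 ∧ j.val = 0 then ξ
      else (1 : ℝ) / (((i.val + j.val + 1 : ℕ) : ℝ) * ((i.val + j.val + 2 : ℕ) : ℝ)))
    (hM₂ : ∀ z, M₂ z = Matrix.of fun i j : Fin n =>
      if i.val = 0 ∧ j.val = 0 then z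
      else (1 : ℝ) / ((i.val + j.val + 1 : ℕ) : ℝ))
    (ξ₀ : ℝ)
    (huniq : ∀ ξ : ℝ, (M₁ ξ).det = 0 → ξ = ξ₀) :
    ∀ z : ℝ, (1 + 1 / (n : ℝ)) * ξ₀ + 1 / 2 - 1 / (2 * (n : ℝ)) < z →
      (M₂ z).PosDef := by
  have : NeZero n := ⟨by omega⟩
  have hξ₀ : ξ₀ = 1 / 2 - 1 / (n * (n + 1)) := by
    refine (huniq _ ?_).symm
    rw [(hM₁ _).trans (of_ite_eq_hankel_add_single _
      fun s => 1 / (((s + 1 : ℕ) : ℝ) * ((s + 2 : ℕ) : ℝ)))]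
    have h := det_hilbertDiffMatrix_add_single_eq_zero n
    rwa [show -(1 / ((n : ℝ) * (n + 1))) =
      1 / 2 - 1 / (n * (n + 1)) - 1 / (((0 + 1 : ℕ) : ℝ) * ((0 + 2 : ℕ) : ℝ)) by norm_num] at h
  have hthreshold : (1 + 1 / (n : ℝ)) * ξ₀ + 1 / 2 - 1 / (2 * (n : ℝ)) = 1 - 1 / n ^ 2 := by
    have : (n : ℝ) ≠ 0 := by positivity
    rw [hξ₀]
    field_simp
    ring
  intro z hz
  rw [(hM₂ z).trans (of_ite_eq_hankel_add_single z fun s => 1 / ((s + 1 : ℕ) : ℝ))]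
  refine posDef_hilbertMatrix_add_single n ?_
  rw [Nat.cast_one, div_one, neg_div]
  linarith

/-- If `ξ₀` is the unique real number with `det M₁(ξ₀) = 0`, then `M₂(z)` (with `(1,1)`
entry `z` and other entries `1/(i+j−1)`) is positive definite for every
`z > (1 + 1/n)ξ₀ + 1/2 − 1/(2n)`. -/
theorem stmt13 (n : ℕ) (hn : 2 ≤ n)
    (M₁ M₂ : ℝ → Matrix (Fin n) (Fin n) ℝ)
    (hM₁ : ∀ ξ, M₁ ξ = Matrix.of fun i j : Fin n =>
      if i.val = 0 ∧ j.val = 0 then ξ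
      else (1 : ℝ) / (((i.val + j.val + 1 : ℕ) : ℝ) * ((i.val + j.val + 2 : ℕ) : ℝ)))
    (hM₂ : ∀ z, M₂ z = Matrix.of fun i j : Fin n =>
      if i.val = 0 ∧ j.val = 0 then z
      else (1 : ℝ) / ((i.val + j.val + 1 : ℕ) : ℝ))
    (ξ₀ : ℝ) (hroot : (M₁ ξ₀).det = 0)
    (huniq : ∀ ξ : ℝ, (M₁ ξ).det = 0 → ξ = ξ₀) :
    ∀ z : ℝ, (1 + 1 / (n : ℝ)) * ξ₀ + 1 / 2 - 1 / (2 * (n : ℝ)) < z →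
      (M₂ z).PosDef :=
  stmt13_general n hn M₁ M₂ hM₁ hM₂ ξ₀ huniq
end
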